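/- For real α > -1, y > 0, ω ∈ ℝ, and natural numbers m, n with m > n: Ŝ_n^m(y) = Ī_{m,0}^{(α)}(y) · (L_n^{(α+1)}(-1/y) - ω y L_n^{(α)}(-1/y)), where Ŝ_n^m = Ī_{m,n}^{(α,α+1)} - ω y Ī_{m,n}^{(α,α)}. -/

import Mathlib

/-! Write `L_k^{(α)}(ρ) = L_k^{(α)}(c) + (ρ - c) q(ρ)` with `c = -1/y` and `deg q < k`. Since
`ρ - c = (1 + yρ)/y`, the kernel `(1 + yρ)⁻¹` cancels against `ρ - c`, so
`I_{m,k} = L_k^{(α)}(c) I_{m,0} + y⁻¹ ∫ ρ^α e^{-ρ} L_m^{(α)} q`, and for `k < m` the last integral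
vanishes by orthogonality of `L_m^{(α)}` to polynomials of degree `< m`. Orthogonality is checked
on monomials `ρ^j`: the moments `Γ(α + i + j + 1)` turn the integral into an alternating binomial
sum `∑ (-1)^i C(m,i) P(i)` with `P` the Pochhammer polynomial `(α + 1 + i)_j` of degree `j < m`,
an `m`-th forward difference, which vanishes. The integrals `I_{m,n}^{(α,α+1)}` follow by summing
over `k ≤ n`, since `∑_{k ≤ n} L_k^{(α)} = L_n^{(α+1)}`. -/

open MeasureTheory Real Set

/-- Generalized Laguerre polynomial `L_n^{(α)}(x)`. -/
noncomputable def genLaguerre (α : ℝ) (n : ℕ) (x : ℝ) : ℝ :=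
  ∑ j ∈ Finset.range (n + 1),
    (-1 : ℝ) ^ j * (Real.Gamma (α + n + 1) /
      (Real.Gamma (α + j + 1) * (Nat.factorial (n - j)))) * x ^ j / (Nat.factorial j)

/-- The function `I_{m,n}^{(α,β)}(y)`. -/
noncomputable def Imn (α β y : ℝ) (m n : ℕ) : ℝ :=
  ∫ ρ in Ioi (0 : ℝ), (1 + y * ρ)⁻¹ * ρ ^ α * Real.exp (-ρ) *
    genLaguerre α m ρ * genLaguerre β n ρ


/-- The normalized function Ī_(m,n)^(α,β)(y). -/
noncomputable def Ibar (α β y : ℝ) (m n : ℕ) : ℝ :=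
  ((Nat.factorial m : ℝ) / Real.Gamma (m + α + 1)) * Imn α β y m n

/-- The function Ŝ_n^m(y) = Ī_(m,n)^(α,α+1)(y) - ω y Ī_(m,n)^(α,α)(y). -/
noncomputable def Shat (α y ω : ℝ) (m n : ℕ) : ℝ :=
  Ibar α (α + 1) y m n - ω * y * Ibar α α y m n

open Polynomial Finset

/-- The generalized binomial coefficient `binom(n + β, n - j)` appearing in `genLaguerre`. -/
noncomputable def gammaBinom (β : ℝ) (n j : ℕ) : ℝ :=
  Real.Gamma (β + n + 1) / (Real.Gamma (β + j + 1) * (n - j).factorial)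

theorem genLaguerre_eq_sum (β : ℝ) (n : ℕ) (x : ℝ) :
    genLaguerre β n x =
      ∑ j ∈ range (n + 1), (-1) ^ j * gammaBinom β n j * x ^ j / j.factorial :=
  rfl

theorem add_nat_add_one_pos {β : ℝ} (hβ : -1 < β) (j : ℕ) : 0 < β + j + 1 := by
  linarith [(j.cast_nonneg : (0 : ℝ) ≤ j)]

theorem gammaBinom_self {β : ℝ} (hβ : -1 < β) (n : ℕ) : gammaBinom β n n = 1 := by
  have : 0 < Real.Gamma (β + n + 1) := Real.Gamma_pos_of_pos (add_nat_add_one_pos hβ n)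
  simp [gammaBinom, this.ne']

theorem gammaBinom_succ {α : ℝ} (hα : -1 < α) {n j : ℕ} (hj : j ≤ n) :
    gammaBinom (α + 1) (n + 1) j = gammaBinom (α + 1) n j + gammaBinom α (n + 1) j := by
  obtain ⟨d, rfl⟩ := Nat.exists_eq_add_of_le hj
  have hj1 : 0 < α + j + 1 := add_nat_add_one_pos hα j
  have hn1 : 0 < α + (j + d : ℝ) + 1 := by linarith [(d.cast_nonneg : (0 : ℝ) ≤ d)]
  have hΓj := (Real.Gamma_pos_of_pos hj1).ne'
  have hΓn := (Real.Gamma_pos_of_pos hn1).ne'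
  simp only [gammaBinom, Nat.add_sub_cancel_left, show j + d + 1 - j = d + 1 by omega,
    Nat.factorial_succ]
  push_cast
  rw [show α + 1 + (j + d + 1 : ℝ) + 1 = α + (j + d) + 1 + 1 + 1 by ring,
    show α + 1 + (j + d : ℝ) + 1 = α + (j + d) + 1 + 1 by ring,
    show α + (j + d + 1 : ℝ) + 1 = α + (j + d) + 1 + 1 by ring,
    show α + 1 + (j : ℝ) + 1 = α + j + 1 + 1 by ring,
    Real.Gamma_add_one (by linarith), Real.Gamma_add_one hn1.ne', Real.Gamma_add_one hj1.ne']
  field_simp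
  ring

theorem genLaguerre_succ {α : ℝ} (hα : -1 < α) (n : ℕ) (x : ℝ) :
    genLaguerre (α + 1) (n + 1) x = genLaguerre (α + 1) n x + genLaguerre α (n + 1) x := by
  simp only [genLaguerre_eq_sum]
  rw [sum_range_succ _ (n + 1), sum_range_succ (fun j => _ * gammaBinom α (n + 1) j * _ / _),
    gammaBinom_self (by linarith), gammaBinom_self hα, ← add_assoc, ← sum_add_distrib]
  congr 1
  refine sum_congr rfl fun j hj => ?_
  rw [gammaBinom_succ hα (mem_range_succ_iff.mp hj)]
  ring

theorem genLaguerre_zero {β : ℝ} (hβ : -1 < β) (x : ℝ) : genLaguerre β 0 x = 1 := by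
  simp [genLaguerre_eq_sum, gammaBinom_self hβ]

theorem sum_range_genLaguerre {α : ℝ} (hα : -1 < α) (n : ℕ) (x : ℝ) :
    ∑ k ∈ range (n + 1), genLaguerre α k x = genLaguerre (α + 1) n x := by
  induction n with
  | zero => simp [genLaguerre_zero hα, genLaguerre_zero (show -1 < α + 1 by linarith)]
  | succ n ih => rw [sum_range_succ, ih, genLaguerre_succ hα]

noncomputable def genLaguerrePoly (β : ℝ) (n : ℕ) : ℝ[X] :=
  ∑ j ∈ range (n + 1), C ((-1) ^ j * gammaBinom β n j / j.factorial) * X ^ j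

theorem eval_genLaguerrePoly (β : ℝ) (n : ℕ) (x : ℝ) :
    (genLaguerrePoly β n).eval x = genLaguerre β n x := by
  simp only [genLaguerrePoly, genLaguerre_eq_sum, eval_finsetSum, eval_mul, eval_C, eval_pow,
    eval_X]
  exact sum_congr rfl fun _ _ => by ring

theorem natDegree_genLaguerrePoly_le (β : ℝ) (n : ℕ) : (genLaguerrePoly β n).natDegree ≤ n :=
  natDegree_sum_le_of_forall_le _ _ fun _ hj =>
    (natDegree_C_mul_X_pow_le _ _).trans (mem_range_succ_iff.mp hj)

theorem Real.Gamma_add_nat {s : ℝ} (hs : 0 < s) (j : ℕ) :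
    Real.Gamma (s + j) = (ascPochhammer ℝ j).eval s * Real.Gamma s := by
  induction j with
  | zero => simp
  | succ j ih =>
    rw [Nat.cast_succ, ← add_assoc, Real.Gamma_add_one (by positivity), ih,
      ascPochhammer_succ_eval]
    ring

theorem sum_range_neg_one_pow_mul_choose_mul_eval {R : Type*} [CommRing R] {P : R[X]} {m : ℕ}
    (hP : P.natDegree < m) :
    ∑ i ∈ range (m + 1), (-1) ^ i * (m.choose i : R) * P.eval (i : R) = 0 := by
  have h := congrFun (fwdDiff_iter_eq_zero_of_degree_lt hP) 0
  rw [fwdDiff_iter_eq_sum_shift] at h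
  simp only [zero_add, nsmul_eq_mul, mul_one, Pi.zero_apply] at h
  calc ∑ i ∈ range (m + 1), (-1) ^ i * (m.choose i : R) * P.eval (i : R)
      = (-1) ^ m * ∑ i ∈ range (m + 1), ((-1) ^ (m - i) * (m.choose i : ℤ)) • P.eval (i : R) := by
        rw [mul_sum]
        refine sum_congr rfl fun i hi => ?_
        have hi : i ≤ m := mem_range_succ_iff.mp hi
        rw [zsmul_eq_mul]
        push_cast
        rw [← mul_assoc, ← mul_assoc, ← pow_add, show m + (m - i) = i + 2 * (m - i) by omega,
          pow_add, pow_mul]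
        simp
    _ = 0 := by rw [h, mul_zero]

section Integrals

open MeasureTheory Set

variable {α : ℝ}

theorem rpow_mul_exp_neg_mul_pow_eq {ρ : ℝ} (hρ : 0 < ρ) (j : ℕ) :
    ρ ^ α * Real.exp (-ρ) * ρ ^ j = Real.exp (-ρ) * ρ ^ (α + j + 1 - 1) := by
  rw [add_sub_cancel_right, Real.rpow_add hρ, Real.rpow_natCast]
  ring

theorem integrableOn_rpow_mul_exp_neg_mul_pow (hα : -1 < α) (j : ℕ) :
    IntegrableOn (fun ρ : ℝ => ρ ^ α * Real.exp (-ρ) * ρ ^ j) (Ioi 0) :=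
  (Real.GammaIntegral_convergent (add_nat_add_one_pos hα j)).congr_fun
    (fun _ hρ => (rpow_mul_exp_neg_mul_pow_eq hρ j).symm) measurableSet_Ioi

theorem integral_rpow_mul_exp_neg_mul_pow (hα : -1 < α) (j : ℕ) :
    ∫ ρ in Ioi 0, ρ ^ α * Real.exp (-ρ) * ρ ^ j = Real.Gamma (α + j + 1) := by
  rw [Real.Gamma_eq_integral (add_nat_add_one_pos hα j)]
  exact setIntegral_congr_fun measurableSet_Ioi fun _ hρ => rpow_mul_exp_neg_mul_pow_eq hρ j

theorem integrableOn_rpow_mul_exp_neg_mul_eval (hα : -1 < α) (p : ℝ[X]) :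
    IntegrableOn (fun ρ : ℝ => ρ ^ α * Real.exp (-ρ) * p.eval ρ) (Ioi 0) := by
  simp_rw [eval_eq_sum_range, mul_sum]
  refine integrable_finsetSum _ fun j _ => ?_
  simpa only [mul_left_comm _ (p.coeff j)] using
    (integrableOn_rpow_mul_exp_neg_mul_pow hα j).const_mul (p.coeff j)

theorem integrableOn_inv_one_add_mul_mul_rpow_mul_exp_neg_mul_eval (hα : -1 < α) {y : ℝ}
    (hy : 0 ≤ y) (p : ℝ[X]) :
    IntegrableOn (fun ρ : ℝ => (1 + y * ρ)⁻¹ * (ρ ^ α * Real.exp (-ρ) * p.eval ρ)) (Ioi 0) := by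
  refine (integrableOn_rpow_mul_exp_neg_mul_eval hα p).bdd_mul (c := 1) (by fun_prop) ?_
  filter_upwards [ae_restrict_mem measurableSet_Ioi] with ρ hρ
  have : 1 ≤ 1 + y * ρ := le_add_of_nonneg_right (mul_nonneg hy (le_of_lt hρ))
  rw [Real.norm_eq_abs, abs_inv, abs_of_pos (by linarith)]
  exact inv_le_one_of_one_le₀ this

theorem integrableOn_Imn_integrand (hα : -1 < α) {y : ℝ} (hy : 0 ≤ y) (β : ℝ) (m n : ℕ) :
    IntegrableOn (fun ρ : ℝ => (1 + y * ρ)⁻¹ * ρ ^ α * Real.exp (-ρ) *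
      genLaguerre α m ρ * genLaguerre β n ρ) (Ioi 0) := by
  simpa only [Polynomial.eval_mul, eval_genLaguerrePoly, mul_assoc] using
    integrableOn_inv_one_add_mul_mul_rpow_mul_exp_neg_mul_eval hα hy
      (genLaguerrePoly α m * genLaguerrePoly β n)

theorem integrableOn_rpow_mul_exp_neg_mul_genLaguerre_mul_eval (hα : -1 < α) (m : ℕ)
    (q : ℝ[X]) :
    IntegrableOn (fun ρ : ℝ => ρ ^ α * Real.exp (-ρ) * genLaguerre α m ρ * q.eval ρ) (Ioi 0) := by
  have := integrableOn_rpow_mul_exp_neg_mul_eval hα (genLaguerrePoly α m * q)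
  simp only [Polynomial.eval_mul, eval_genLaguerrePoly] at this
  simpa only [mul_assoc] using this

theorem gammaBinom_mul_Gamma_add_nat (hα : -1 < α) {m i : ℕ} (hi : i ≤ m) (j : ℕ) :
    gammaBinom α m i / i.factorial * Real.Gamma (α + ↑(i + j) + 1) =
      Real.Gamma (α + m + 1) / m.factorial *
        (m.choose i * ((ascPochhammer ℝ j).comp (X + C (α + 1))).eval (i : ℝ)) := by
  have hi1 := add_nat_add_one_pos hα i
  rw [show α + ↑(i + j) + 1 = (α + i + 1) + j by push_cast; ring,
    Real.Gamma_add_nat hi1, Nat.cast_choose ℝ hi, gammaBinom]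
  simp only [eval_comp, eval_add, eval_X, eval_C]
  have := (Real.Gamma_pos_of_pos hi1).ne'
  field_simp
  ring_nf

theorem integral_genLaguerre_mul_pow_eq_zero (hα : -1 < α) {m j : ℕ} (hj : j < m) :
    ∫ ρ in Ioi 0, ρ ^ α * Real.exp (-ρ) * genLaguerre α m ρ * ρ ^ j = 0 := by
  set P : ℝ[X] := (ascPochhammer ℝ j).comp (X + C (α + 1))
  have hP : P.natDegree < m := by
    rwa [natDegree_comp, ascPochhammer_natDegree, natDegree_X_add_C, mul_one]
  calc ∫ ρ in Ioi 0, ρ ^ α * Real.exp (-ρ) * genLaguerre α m ρ * ρ ^ j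
      = ∫ ρ in Ioi 0, ∑ i ∈ range (m + 1), (-1) ^ i * gammaBinom α m i / i.factorial *
          (ρ ^ α * Real.exp (-ρ) * ρ ^ (i + j)) := by
        congr 1 with ρ
        rw [genLaguerre_eq_sum, mul_sum, sum_mul]
        exact sum_congr rfl fun i _ => by ring
    _ = ∑ i ∈ range (m + 1), (-1) ^ i * gammaBinom α m i / i.factorial *
          Real.Gamma (α + ↑(i + j) + 1) := by
        rw [integral_finsetSum _ fun i _ =>
          (integrableOn_rpow_mul_exp_neg_mul_pow hα _).const_mul _]
        simp_rw [integral_const_mul, integral_rpow_mul_exp_neg_mul_pow hα]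
    _ = Real.Gamma (α + m + 1) / m.factorial *
          ∑ i ∈ range (m + 1), (-1) ^ i * (m.choose i : ℝ) * P.eval (i : ℝ) := by
        rw [mul_sum]
        refine sum_congr rfl fun i hi => ?_
        rw [mul_div_assoc, mul_assoc, gammaBinom_mul_Gamma_add_nat hα (mem_range_succ_iff.mp hi)]
        ring
    _ = 0 := by rw [sum_range_neg_one_pow_mul_choose_mul_eval hP, mul_zero]

theorem integral_genLaguerre_mul_eval_eq_zero (hα : -1 < α) {m : ℕ} {q : ℝ[X]}
    (hq : q.natDegree < m) :
    ∫ ρ in Ioi 0, ρ ^ α * Real.exp (-ρ) * genLaguerre α m ρ * q.eval ρ = 0 := by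
  have hint (j : ℕ) := integrableOn_rpow_mul_exp_neg_mul_genLaguerre_mul_eval hα m (X ^ j)
  simp only [eval_pow, eval_X] at hint
  simp_rw [eval_eq_sum_range' hq, mul_sum, mul_left_comm _ (q.coeff _)]
  rw [integral_finsetSum _ fun j _ => (hint j).const_mul _]
  refine sum_eq_zero fun j hj => ?_
  rw [integral_const_mul, integral_genLaguerre_mul_pow_eq_zero hα (mem_range.mp hj), mul_zero]

theorem Imn_add_one_eq_sum (hα : -1 < α) {y : ℝ} (hy : 0 ≤ y) (m n : ℕ) :
    Imn α (α + 1) y m n = ∑ k ∈ range (n + 1), Imn α α y m k := by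
  unfold Imn
  rw [← integral_finsetSum _ fun k _ => integrableOn_Imn_integrand hα hy α m k]
  congr 1 with ρ
  rw [← sum_range_genLaguerre hα, mul_sum]

theorem Imn_eq_genLaguerre_mul_Imn_zero (hα : -1 < α) {y : ℝ} (hy : 0 < y) {m k : ℕ}
    (hk : k < m) :
    Imn α α y m k = genLaguerre α k (-1 / y) * Imn α α y m 0 := by
  set c := -1 / y
  set q := genLaguerrePoly α k /ₘ (X - C c)
  have hq : q.natDegree < m := by
    rw [natDegree_divByMonic _ (monic_X_sub_C c), natDegree_X_sub_C]
    have := natDegree_genLaguerrePoly_le α k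
    omega
  have hdiv (ρ : ℝ) : genLaguerre α k ρ = genLaguerre α k c + (ρ - c) * q.eval ρ := by
    have := congrArg (eval ρ) (modByMonic_add_div (genLaguerrePoly α k) (X - C c))
    simpa only [modByMonic_X_sub_C_eq_C_eval, eval_add, Polynomial.eval_mul, eval_sub, eval_C,
      eval_X, eval_genLaguerrePoly] using this.symm
  have hsplit : ∀ ρ ∈ Ioi (0 : ℝ),
      (1 + y * ρ)⁻¹ * ρ ^ α * Real.exp (-ρ) * genLaguerre α m ρ * genLaguerre α k ρ =
        genLaguerre α k c *
            ((1 + y * ρ)⁻¹ * ρ ^ α * Real.exp (-ρ) * genLaguerre α m ρ * genLaguerre α 0 ρ) +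
          y⁻¹ * (ρ ^ α * Real.exp (-ρ) * genLaguerre α m ρ * q.eval ρ) := by
    intro ρ hρ
    have hρy : 0 < 1 + y * ρ := by have := mul_pos hy hρ; linarith
    have hc : (1 + y * ρ)⁻¹ * (ρ - c) = y⁻¹ := by
      rw [show ρ - c = (1 + y * ρ) * y⁻¹ by simp only [c]; field_simp; ring,
        inv_mul_cancel_left₀ hρy.ne']
    rw [hdiv ρ, genLaguerre_zero hα, ← hc]
    ring
  unfold Imn
  rw [setIntegral_congr_fun measurableSet_Ioi hsplit,
    integral_add ((integrableOn_Imn_integrand hα hy.le α m 0).const_mul _)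
      ((integrableOn_rpow_mul_exp_neg_mul_genLaguerre_mul_eval hα m q).const_mul _),
    integral_const_mul, integral_const_mul, integral_genLaguerre_mul_eval_eq_zero hα hq,
    mul_zero, add_zero]

end Integrals

theorem Shat_factorize (α y ω : ℝ) (hα : -1 < α) (hy : 0 < y)
    (m n : ℕ) (hmn : n < m) :
    Shat α y ω m n =
      Ibar α α y m 0 *
        (genLaguerre (α + 1) n (-1 / y) - ω * y * genLaguerre α n (-1 / y)) := by
  have hsum : Imn α (α + 1) y m n = genLaguerre (α + 1) n (-1 / y) * Imn α α y m 0 := by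
    rw [Imn_add_one_eq_sum hα hy.le, ← sum_range_genLaguerre hα, sum_mul]
    exact sum_congr rfl fun k hk =>
      Imn_eq_genLaguerre_mul_Imn_zero hα hy ((mem_range_succ_iff.mp hk).trans_lt hmn)
  unfold Shat Ibar
  rw [hsum, Imn_eq_genLaguerre_mul_Imn_zero hα hy hmn]
  ring
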